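/- arXiv:2503.18920 — 3 statements merged into one kernel-verified Lean document; each statement's English description precedes it below -/
import Mathlib

section
/- Suppose 2 ≤ k ≤ n are integers and f : V(P_n) → {1,...,k} is a k-color weak maximizer of the Wiener index W on P_n. Then W(f) = max{ W(f') : f' a k-color weak maximizer of W on P_n } if and only if f has a color class of the largest possible size n − (k − 1). Equivalently, since every surjective k-coloring has Wiener index at most that of some k-color weak maximizer of the same type, such f are exactly the k-color maximizers of W on P_n, i.e., those surjective f with W(f) ≥ W(f') for all surjective f' : V(P_n) → {1,...,k}. -/
open SimpleGraph Finset

/-- The cycle graph on vertex set `ZMod n`, with an edge between `i` and `i+1` (mod `n`). -/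
def cycleGraphZMod (n : ℕ) : SimpleGraph (ZMod n) :=
  SimpleGraph.fromRel (fun u v => v = u + 1)

/-- The Wiener index of a set of vertices: the sum of all pairwise geodesic distances. -/
noncomputable def wienerSet {V : Type*} [Fintype V] [DecidableEq V]
    (G : SimpleGraph V) (A : Finset V) : ℕ :=
  (∑ p ∈ A.offDiag, G.dist p.1 p.2) / 2

/-- `A` is a maximizer of `W` on `G`. -/
def IsWienerMaximizer {V : Type*} [Fintype V] [DecidableEq V]
    (G : SimpleGraph V) (A : Finset V) : Prop :=
  ∀ B : Finset V, B.card = A.card → wienerSet G B ≤ wienerSet G A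

/-- `A ⊆ V(C_n)` is almost good. -/
def AlmostGood (n : ℕ) (A : Finset (ZMod n)) : Prop :=
  A.card = 1 ∨ A.card = n - 1 ∨
    ∃ c₁ c₂ : ((cycleGraphZMod n).induce (↑A : Set (ZMod n))).ConnectedComponent,
      c₁ ≠ c₂ ∧ (∀ c, c = c₁ ∨ c = c₂) ∧
      (c₁.supp.ncard : ℤ) - (c₂.supp.ncard : ℤ) ≤ 1 ∧
      (c₂.supp.ncard : ℤ) - (c₁.supp.ncard : ℤ) ≤ 1

/-- `A ⊆ V(C_n)` is good: both `A` and its complement are almost good. -/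
def GoodSet (n : ℕ) [NeZero n] (A : Finset (ZMod n)) : Prop :=
  AlmostGood n A ∧ AlmostGood n (Finset.univ \ A)

/-- The color class of color `i` for the coloring `f`. -/
def colorClass {V : Type*} [Fintype V] {k : ℕ} (f : V → Fin k) (i : Fin k) : Finset V :=
  Finset.univ.filter (fun v => f v = i)

/-- The Wiener index of a coloring: the sum of the Wiener indices of its color classes. -/
noncomputable def wienerColoring {V : Type*} [Fintype V] [DecidableEq V] {k : ℕ}
    (G : SimpleGraph V) (f : V → Fin k) : ℕ :=
  ∑ i : Fin k, wienerSet G (colorClass f i)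

/-- The type of a coloring, as the multiset of cardinalities of its color classes
(equality of multisets is equality of the nondecreasing rearrangements). -/
def colorType {V : Type*} [Fintype V] {k : ℕ} (f : V → Fin k) : Multiset ℕ :=
  (Finset.univ : Finset (Fin k)).val.map (fun i => (colorClass f i).card)

/-- `f` is a `k`-color weak maximizer of `W` on `G`. -/
def IsWeakMaximizer {V : Type*} [Fintype V] [DecidableEq V] {k : ℕ}
    (G : SimpleGraph V) (f : V → Fin k) : Prop :=
  Function.Surjective f ∧ ∀ g : V → Fin k, Function.Surjective g →
    colorType g = colorType f → wienerColoring G g ≤ wienerColoring G f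

/-- The coloring obtained from `f` by swapping the colors of `u` and `v`. -/
def swapColors {V α : Type*} [DecidableEq V] (f : V → α) (u v : V) : V → α :=
  f ∘ Equiv.swap u v

/-- `f` is a `k`-color local weak maximizer of `W` on `G`. -/
def IsLocalWeakMaximizer {V : Type*} [Fintype V] [DecidableEq V] {k : ℕ}
    (G : SimpleGraph V) (f : V → Fin k) : Prop :=
  Function.Surjective f ∧ ∀ u v : V, G.Adj u v →
    wienerColoring G (swapColors f u v) ≤ wienerColoring G f

/-- The number of vertices to the left of `u` in the path that get the same color as `u`. -/
def leftCount {n k : ℕ} (f : Fin n → Fin k) (u : Fin n) : ℕ :=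
  (Finset.univ.filter (fun w => w < u ∧ f w = f u)).card

/-- The number of vertices to the right of `u` in the path that get the same color as `u`. -/
def rightCount {n k : ℕ} (f : Fin n → Fin k) (u : Fin n) : ℕ :=
  (Finset.univ.filter (fun w => u < w ∧ f w = f u)).card

/-- The sum of the `j` largest entries of a multiset of naturals. -/
def sumLargest (s : Multiset ℕ) (j : ℕ) : ℕ :=
  (((s.sort (· ≤ ·)).reverse).take j).sum

/-- `x ≺ y` : `x` is majorized by `y`. -/
def MajorizedBy (x y : Multiset ℕ) : Prop :=
  x.card = y.card ∧ x.sum = y.sum ∧ ∀ j, sumLargest x j ≤ sumLargest y j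

/-- The reverse Robin Hood transfer `R_{j,j'}` applied to the (sorted) list `t`,
with `j ≤ j'` zero-indexed: subtract `1` from the `j`-th entry and add `1` to the `j'`-th
entry; the result is recorded as a multiset (i.e. up to rearrangement). -/
def rhTransfer (t : List ℕ) (j j' : ℕ) : Multiset ℕ :=
  ↑((t.set j (t.getD j 0 - 1)).set j' ((t.set j (t.getD j 0 - 1)).getD j' 0 + 1))

/-- `t(n,k)` : the unique nondecreasing `k`-tuple of positive integers summing to `n`
whose entries pairwise differ by at most one, as a multiset. -/
def equitableType (n k : ℕ) : Multiset ℕ :=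
  Multiset.replicate (k - n % k) (n / k) + Multiset.replicate (n % k) (n / k + 1)

/-- One step of the operation `R`: `s ∈ R({t})`, i.e. `s = t` or `s` is obtained from `t` by
a reverse Robin Hood transfer between two entries that are equal and even. -/
def REstep (t s : Multiset ℕ) : Prop :=
  s = t ∨ ∃ m : ℕ, Even m ∧ 2 ≤ t.count m ∧
    s = (t - Multiset.replicate 2 m) + {m - 1, m + 1}

/-- `s ∈ R^∞({t(n,k)})`. -/
def InRInfty (n k : ℕ) (s : Multiset ℕ) : Prop :=
  Relation.ReflTransGen REstep (equitableType n k) s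

namespace PathWienerAux

/-! ### Distance on the path graph -/

lemma exists_walk (n : ℕ) : ∀ d (u v : Fin n), v.val = u.val + d →
    ∃ w : (pathGraph n).Walk u v, w.length = d := by
  intro d
  induction d with
  | zero =>
    intro u v h
    have : u = v := Fin.ext (by omega)
    subst this
    exact ⟨.nil, rfl⟩
  | succ d ih =>
    intro u v h
    have hu1 : u.val + 1 < n := by have := v.isLt; omega
    have hadj : (pathGraph n).Adj u ⟨u.val + 1, hu1⟩ := by
      rw [pathGraph_adj]; left; rfl
    obtain ⟨w, hw⟩ := ih ⟨u.val + 1, hu1⟩ v (by simp; omega)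
    exact ⟨.cons hadj w, by simp [hw]⟩

lemma walk_length_ge {n : ℕ} {u v : Fin n} (w : (pathGraph n).Walk u v) :
    (v.val - u.val) + (u.val - v.val) ≤ w.length := by
  induction w with
  | nil => omega
  | cons h p ih =>
    rw [pathGraph_adj] at h
    rw [SimpleGraph.Walk.length_cons]
    omega

lemma pathGraph_dist {n : ℕ} (u v : Fin n) :
    (pathGraph n).dist u v = (v.val - u.val) + (u.val - v.val) := by
  rcases le_total u.val v.val with h | h
  · obtain ⟨w, hw⟩ := exists_walk n (v.val - u.val) u v (by omega)
    obtain ⟨p, hp⟩ := w.reachable.exists_walk_length_eq_dist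
    have h1 := SimpleGraph.dist_le w
    have h2 := walk_length_ge p
    omega
  · obtain ⟨w, hw⟩ := exists_walk n (u.val - v.val) v u (by omega)
    obtain ⟨p, hp⟩ := w.reachable.symm.exists_walk_length_eq_dist
    have h1 := SimpleGraph.dist_le w
    have h2 := walk_length_ge p
    rw [SimpleGraph.dist_comm] at h1
    omega

/-! ### The cut identity -/

/-- Number of elements of `A` strictly to the left of the cut at `s`. -/
def cutL {n : ℕ} (A : Finset (Fin n)) (s : ℕ) : ℕ := (A.filter (fun v => v.val < s)).card

/-- Number of elements of `A` to the right of the cut at `s`. -/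
def cutR {n : ℕ} (A : Finset (Fin n)) (s : ℕ) : ℕ := (A.filter (fun v => s ≤ v.val)).card

lemma cutL_add_cutR {n : ℕ} (A : Finset (Fin n)) (s : ℕ) :
    cutL A s + cutR A s = A.card := by
  rw [cutL, cutR]
  have h : A.filter (fun v => s ≤ v.val) = A.filter (fun v => ¬ v.val < s) := by
    apply Finset.filter_congr
    intro v _
    simp only [not_lt]
  rw [h, Finset.card_filter_add_card_filter_not]

lemma cutL_le_card {n : ℕ} (A : Finset (Fin n)) (s : ℕ) : cutL A s ≤ A.card :=
  Finset.card_le_card (Finset.filter_subset _ _)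

lemma wienerSet_eq {n : ℕ} (A : Finset (Fin n)) :
    wienerSet (pathGraph n) A = ∑ u ∈ A, ∑ v ∈ A, (v.val - u.val) := by
  have hsub : A.offDiag ⊆ A ×ˢ A := by
    intro p hp
    rw [Finset.mem_offDiag] at hp
    rw [Finset.mem_product]
    exact ⟨hp.1, hp.2.1⟩
  have h0 : ∑ p ∈ A ×ˢ A, (pathGraph n).dist p.1 p.2
      = ∑ p ∈ A.offDiag, (pathGraph n).dist p.1 p.2 := by
    refine (Finset.sum_subset hsub ?_).symm
    intro p hp hnp
    rw [Finset.mem_product] at hp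
    rw [Finset.mem_offDiag] at hnp
    have : p.1 = p.2 := by tauto
    rw [this, SimpleGraph.dist_self]
  have key : ∑ p ∈ A.offDiag, (pathGraph n).dist p.1 p.2
      = 2 * ∑ u ∈ A, ∑ v ∈ A, (v.val - u.val) := by
    rw [← h0, Finset.sum_product]
    have hh : ∀ u ∈ A, ∑ v ∈ A, (pathGraph n).dist u v
        = (∑ v ∈ A, (v.val - u.val)) + ∑ v ∈ A, (u.val - v.val) := by
      intro u _
      rw [← Finset.sum_add_distrib]
      exact Finset.sum_congr rfl fun v _ => pathGraph_dist u v
    rw [Finset.sum_congr rfl hh, Finset.sum_add_distrib, two_mul]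
    congr 1
    exact Finset.sum_comm
  rw [wienerSet, key]
  omega

lemma cut_identity {n : ℕ} (A : Finset (Fin n)) :
    wienerSet (pathGraph n) A = ∑ s ∈ Finset.Ico 1 n, cutL A s * cutR A s := by
  rw [wienerSet_eq]
  have h1 : ∀ u v : Fin n, (v.val - u.val)
      = ∑ s ∈ Finset.Ico 1 n, (if u.val < s ∧ s ≤ v.val then 1 else 0) := by
    intro u v
    rw [← Finset.card_filter]
    have he : (Finset.Ico 1 n).filter (fun s => u.val < s ∧ s ≤ v.val)
        = Finset.Ico (u.val + 1) (v.val + 1) := by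
      ext s
      simp only [Finset.mem_filter, Finset.mem_Ico]
      have := u.isLt; have := v.isLt
      omega
    rw [he, Nat.card_Ico]
    omega
  simp_rw [h1]
  calc ∑ u ∈ A, ∑ v ∈ A, ∑ s ∈ Finset.Ico 1 n, (if u.val < s ∧ s ≤ v.val then 1 else 0)
      = ∑ u ∈ A, ∑ s ∈ Finset.Ico 1 n, ∑ v ∈ A, (if u.val < s ∧ s ≤ v.val then 1 else 0) :=
        Finset.sum_congr rfl fun u _ => Finset.sum_comm
    _ = ∑ s ∈ Finset.Ico 1 n, ∑ u ∈ A, ∑ v ∈ A, (if u.val < s ∧ s ≤ v.val then 1 else 0) :=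
        Finset.sum_comm
    _ = ∑ s ∈ Finset.Ico 1 n, cutL A s * cutR A s := by
        refine Finset.sum_congr rfl fun s _ => ?_
        rw [cutL, cutR, Finset.card_filter, Finset.card_filter, Finset.sum_mul_sum]
        refine Finset.sum_congr rfl fun u _ => Finset.sum_congr rfl fun v _ => ?_
        by_cases h1 : u.val < s <;> by_cases h2 : s ≤ v.val <;> simp [h1, h2]

lemma wienerColoring_eq {n k : ℕ} (f : Fin n → Fin k) :
    wienerColoring (pathGraph n) f
      = ∑ s ∈ Finset.Ico 1 n, ∑ i : Fin k, cutL (colorClass f i) s * cutR (colorClass f i) s := by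
  rw [wienerColoring]
  have h : ∀ i ∈ (Finset.univ : Finset (Fin k)), wienerSet (pathGraph n) (colorClass f i)
      = ∑ s ∈ Finset.Ico 1 n, cutL (colorClass f i) s * cutR (colorClass f i) s :=
    fun i _ => cut_identity _
  rw [Finset.sum_congr rfl h]
  exact Finset.sum_comm

/-! ### Basic facts about color classes -/

lemma sum_card_classes {n k : ℕ} (f : Fin n → Fin k) :
    ∑ i : Fin k, (colorClass f i).card = n := by
  have := Finset.card_eq_sum_card_fiberwise
    (f := f) (s := (Finset.univ : Finset (Fin n))) (t := Finset.univ)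
    (fun x _ => Finset.mem_univ (f x))
  simp only [Finset.card_univ, Fintype.card_fin] at this
  simp only [colorClass]
  exact this.symm

lemma card_class_pos {n k : ℕ} {f : Fin n → Fin k} (hf : Function.Surjective f) (i : Fin k) :
    1 ≤ (colorClass f i).card := by
  obtain ⟨v, hv⟩ := hf i
  exact Finset.card_pos.mpr ⟨v, by simp [colorClass, hv]⟩

lemma card_class_le {n k : ℕ} {f : Fin n → Fin k} (hf : Function.Surjective f) (i : Fin k) :
    (colorClass f i).card ≤ n - k + 1 := by
  have hsum := sum_card_classes f
  have hsplit : (colorClass f i).card + ∑ j ∈ Finset.univ.erase i, (colorClass f j).card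
      = ∑ j : Fin k, (colorClass f j).card :=
    Finset.add_sum_erase Finset.univ (fun j => (colorClass f j).card) (Finset.mem_univ i)
  have hge : (Finset.univ.erase i).card • 1
      ≤ ∑ j ∈ Finset.univ.erase i, (colorClass f j).card :=
    Finset.card_nsmul_le_sum _ _ _ (fun j _ => card_class_pos hf j)
  have hcard : (Finset.univ.erase i).card = k - 1 := by
    rw [Finset.card_erase_of_mem (Finset.mem_univ i), Finset.card_univ, Fintype.card_fin]
  rw [hcard, smul_eq_mul, mul_one] at hge
  have hk : 1 ≤ k := i.pos
  omega

lemma card_classes_one {n k : ℕ} {f : Fin n → Fin k} (hf : Function.Surjective f)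
    (i₀ : Fin k) (h0 : (colorClass f i₀).card = n - k + 1) (hkn : k ≤ n) :
    ∀ i : Fin k, i ≠ i₀ → (colorClass f i).card = 1 := by
  have hsum := sum_card_classes f
  have hsplit : (colorClass f i₀).card + ∑ j ∈ Finset.univ.erase i₀, (colorClass f j).card
      = ∑ j : Fin k, (colorClass f j).card :=
    Finset.add_sum_erase Finset.univ (fun j => (colorClass f j).card) (Finset.mem_univ i₀)
  have hcard : (Finset.univ.erase i₀).card = k - 1 := by
    rw [Finset.card_erase_of_mem (Finset.mem_univ i₀), Finset.card_univ, Fintype.card_fin]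
  have hk : 1 ≤ k := i₀.pos
  have hsum' : ∑ j ∈ Finset.univ.erase i₀, (colorClass f j).card = k - 1 := by omega
  have hall : ∀ j ∈ Finset.univ.erase i₀, (colorClass f j).card = 1 := by
    by_contra hcon
    push_neg at hcon
    obtain ⟨j, hj, hj2⟩ := hcon
    have hlt : ∑ x ∈ Finset.univ.erase i₀, (1 : ℕ)
        < ∑ x ∈ Finset.univ.erase i₀, (colorClass f x).card := by
      refine Finset.sum_lt_sum (fun x _ => card_class_pos hf x) ⟨j, hj, ?_⟩
      have := card_class_pos hf j
      omega
    rw [Finset.sum_const, smul_eq_mul, mul_one, hcard, hsum'] at hlt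
    omega
  intro i hi
  exact hall i (Finset.mem_erase.mpr ⟨hi, Finset.mem_univ i⟩)

/-! ### The per-cut bound -/

lemma prod_mono (x y A : ℕ) (h1 : x ≤ y) (h2 : 2 * y ≤ A) : x * (A - x) ≤ y * (A - y) := by
  have hx : x ≤ A := by omega
  have hy : y ≤ A := by omega
  zify [hx, hy]
  nlinarith

/-- `m(s) = min(s, n-s, ⌊(n-k+1)/2⌋)`. -/
def mcut (n k s : ℕ) : ℕ := min s (min (n - s) ((n - k + 1) / 2))

/-- The per-cut upper bound `φ(m(s))` where `φ(x) = x(n-k+1-x)`. -/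
def phicut (n k s : ℕ) : ℕ := mcut n k s * ((n - k + 1) - mcut n k s)

lemma percut {k n s : ℕ} (hk : 2 ≤ k) (a L : Fin k → ℕ)
    (ha1 : ∀ i, 1 ≤ a i) (hLa : ∀ i, L i ≤ a i)
    (hsuma : ∑ i, a i = n) (hsumL : ∑ i, L i = s) :
    ∑ i, L i * (a i - L i) ≤ phicut n k s := by
  set A := n - k + 1 with hA
  set m := mcut n k s with hm
  set u : Fin k → ℕ := fun i => min (L i) (a i - L i) with hu
  set v : Fin k → ℕ := fun i => max (L i) (a i - L i) with hv
  set U := ∑ i, u i with hU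
  have hkn : k ≤ n := by
    calc k = ∑ _i : Fin k, 1 := by simp
    _ ≤ ∑ i, a i := Finset.sum_le_sum (fun i _ => ha1 i)
    _ = n := hsuma
  have huv : ∀ i, L i * (a i - L i) = u i * v i := by
    intro i
    rw [hu, hv]
    exact (min_mul_max (L i) (a i - L i)).symm
  have hv1 : ∀ i, 1 ≤ v i := by
    intro i
    have h1 := ha1 i; have h2 := hLa i
    simp only [hv]
    omega
  have huvsum : ∀ i, u i + v i = a i := by
    intro i
    have h2 := hLa i
    simp only [hu, hv]
    omega
  have htot : U + ∑ i, v i = n := by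
    rw [hU, ← Finset.sum_add_distrib]
    rw [← hsuma]
    exact Finset.sum_congr rfl fun i _ => huvsum i
  have hVbound : ∀ i : Fin k, v i + U + (k - 1) ≤ n := by
    intro i
    have hsplit : v i + ∑ j ∈ Finset.univ.erase i, v j = ∑ j : Fin k, v j :=
      Finset.add_sum_erase Finset.univ v (Finset.mem_univ i)
    have hge : (Finset.univ.erase i).card • 1 ≤ ∑ j ∈ Finset.univ.erase i, v j :=
      Finset.card_nsmul_le_sum _ _ _ (fun j _ => hv1 j)
    have hcard : (Finset.univ.erase i).card = k - 1 := by
      rw [Finset.card_erase_of_mem (Finset.mem_univ i), Finset.card_univ, Fintype.card_fin]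
    rw [hcard, smul_eq_mul, mul_one] at hge
    omega
  have hUA : U + 1 ≤ A := by
    have h1 := hVbound ⟨0, by omega⟩
    have h2 := hv1 ⟨0, by omega⟩
    omega
  have hstep : ∑ i, u i * v i ≤ U * (A - U) := by
    calc ∑ i, u i * v i ≤ ∑ i, u i * (A - U) := by
          refine Finset.sum_le_sum fun i _ => Nat.mul_le_mul_left _ ?_
          have := hVbound i
          omega
    _ = U * (A - U) := by rw [← Finset.sum_mul]
  have hUs : U ≤ s := by
    rw [← hsumL, hU]
    exact Finset.sum_le_sum fun i _ => min_le_left _ _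
  have hUns : U ≤ n - s := by
    have h2 : ∑ i, (a i - L i) + ∑ i, L i = ∑ i, a i := by
      rw [← Finset.sum_add_distrib]
      exact Finset.sum_congr rfl fun i _ => by have := hLa i; omega
    have h3 : U ≤ ∑ i, (a i - L i) := by
      rw [hU]
      exact Finset.sum_le_sum fun i _ => min_le_right _ _
    omega
  calc ∑ i, L i * (a i - L i) = ∑ i, u i * v i := Finset.sum_congr rfl fun i _ => huv i
  _ ≤ U * (A - U) := hstep
  _ ≤ phicut n k s := by
      rw [phicut, ← hm, ← hA]
      rcases le_total U (A - U) with hc | hc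
      · have hUm : U ≤ m := by
          rw [hm, mcut, ← hA]
          omega
        exact prod_mono U m A hUm (by rw [hm, mcut, ← hA]; omega)
      · have hx : A - U ≤ m := by
          rw [hm, mcut, ← hA]
          omega
        have heq : U * (A - U) = (A - U) * (A - (A - U)) := by
          have : A - (A - U) = U := by omega
          rw [this, Nat.mul_comm]
        rw [heq]
        exact prod_mono (A - U) m A hx (by rw [hm, mcut, ← hA]; omega)

lemma sum_cutL {n k : ℕ} (f : Fin n → Fin k) (s : ℕ) :
    ∑ i : Fin k, cutL (colorClass f i) s
      = (Finset.univ.filter (fun v : Fin n => v.val < s)).card := by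
  have := Finset.card_eq_sum_card_fiberwise
    (f := f) (s := Finset.univ.filter (fun v : Fin n => v.val < s)) (t := Finset.univ)
    (fun x _ => Finset.mem_univ (f x))
  rw [this]
  refine Finset.sum_congr rfl fun i _ => ?_
  rw [cutL, colorClass, Finset.filter_filter, Finset.filter_filter]
  congr 1
  ext v
  simp [and_comm]

lemma card_filter_val {n : ℕ} (P : ℕ → Prop) [DecidablePred P] :
    (Finset.univ.filter (fun v : Fin n => P v.val)).card = ((Finset.range n).filter P).card := by
  rw [Finset.card_filter, Finset.card_filter]
  exact Fin.sum_univ_eq_sum_range (fun j => if P j then 1 else 0) n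

lemma card_lt_cut {n : ℕ} (s : ℕ) (hs : s ≤ n) :
    (Finset.univ.filter (fun v : Fin n => v.val < s)).card = s := by
  have h1 : (Finset.univ.filter (fun v : Fin n => v.val < s)).card
      = ((Finset.range n).filter (fun x => x < s)).card := card_filter_val (fun x => x < s)
  rw [h1]
  have h2 : (Finset.range n).filter (fun x => x < s) = Finset.range s := by
    ext x
    simp only [Finset.mem_filter, Finset.mem_range]
    omega
  rw [h2, Finset.card_range]

/-- The general per-cut bound for a surjective coloring. -/
lemma cut_bound {n k : ℕ} (hk : 2 ≤ k) {f : Fin n → Fin k} (hf : Function.Surjective f)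
    (s : ℕ) (hs : s ≤ n) :
    ∑ i : Fin k, cutL (colorClass f i) s * cutR (colorClass f i) s ≤ phicut n k s := by
  have hrw : ∀ i : Fin k, cutL (colorClass f i) s * cutR (colorClass f i) s
      = cutL (colorClass f i) s * ((colorClass f i).card - cutL (colorClass f i) s) := by
    intro i
    have := cutL_add_cutR (colorClass f i) s
    congr 1
    omega
  simp_rw [hrw]
  refine percut hk (fun i => (colorClass f i).card) (fun i => cutL (colorClass f i) s)
    (fun i => card_class_pos hf i) (fun i => cutL_le_card _ _) (sum_card_classes f) ?_
  rw [sum_cutL, card_lt_cut s hs]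

/-- The global upper bound `B`. -/
def wB (n k : ℕ) : ℕ := ∑ s ∈ Finset.Ico 1 n, phicut n k s

lemma wiener_le_wB {n k : ℕ} (hk : 2 ≤ k) {f : Fin n → Fin k} (hf : Function.Surjective f) :
    wienerColoring (pathGraph n) f ≤ wB n k := by
  rw [wienerColoring_eq, wB]
  refine Finset.sum_le_sum fun s hs => ?_
  rw [Finset.mem_Ico] at hs
  exact cut_bound hk hf s (by omega)

/-! ### The extremal coloring -/

/-- The extremal coloring: color `i₀` on the first `⌈a/2⌉` and last `⌊a/2⌋` vertices
(`a = n - k + 1`), the remaining colors on the `k - 1` middle vertices. -/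
def extremal (n k : ℕ) (hk : 2 ≤ k) (hkn : k ≤ n) (i₀ : Fin k) : Fin n → Fin k := fun v =>
  if h : v.val < (n - k + 1) - (n - k + 1) / 2 ∨ n - (n - k + 1) / 2 ≤ v.val then i₀
  else if h2 : v.val - ((n - k + 1) - (n - k + 1) / 2) < i₀.val
    then ⟨v.val - ((n - k + 1) - (n - k + 1) / 2), h2.trans i₀.isLt⟩
    else ⟨v.val - ((n - k + 1) - (n - k + 1) / 2) + 1, by omega⟩

lemma extremal_eq_i0_iff {n k : ℕ} (hk : 2 ≤ k) (hkn : k ≤ n) (i₀ : Fin k) (v : Fin n) :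
    extremal n k hk hkn i₀ v = i₀
      ↔ (v.val < (n - k + 1) - (n - k + 1) / 2 ∨ n - (n - k + 1) / 2 ≤ v.val) := by
  have h2 : i₀.val < k := i₀.isLt
  rw [extremal]
  split_ifs with h h2' <;> simp only [Fin.ext_iff] <;>
    first
      | omega
      | (simp only [true_iff, iff_true, false_iff, iff_false, eq_self_iff_true]; omega)

lemma extremal_eq_iff {n k : ℕ} (hk : 2 ≤ k) (hkn : k ≤ n) (i₀ i : Fin k) (hi : i ≠ i₀)
    (v : Fin n) :
    extremal n k hk hkn i₀ v = i
      ↔ v.val = ((n - k + 1) - (n - k + 1) / 2)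
          + (if i.val < i₀.val then i.val else i.val - 1) := by
  have h1 : i.val < k := i.isLt
  have h2 : i₀.val < k := i₀.isLt
  have h3 : i.val ≠ i₀.val := fun h => hi (Fin.ext h)
  have h4 : v.val < n := v.isLt
  rw [extremal]
  split_ifs with h h2' <;> simp only [Fin.ext_iff] <;>
    first
      | omega
      | (simp only [true_iff, iff_true, false_iff, iff_false, eq_self_iff_true]; omega)

lemma extremal_surjective {n k : ℕ} (hk : 2 ≤ k) (hkn : k ≤ n) (i₀ : Fin k) :
    Function.Surjective (extremal n k hk hkn i₀) := by
  intro i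
  by_cases hi : i = i₀
  · subst hi
    refine ⟨⟨0, by omega⟩, ?_⟩
    rw [extremal_eq_i0_iff hk hkn]
    simp only
    omega
  · have h1 : i.val < k := i.isLt
    have h2 : i₀.val < k := i₀.isLt
    have h3 : i.val ≠ i₀.val := fun h => hi (Fin.ext h)
    refine ⟨⟨((n - k + 1) - (n - k + 1) / 2)
      + (if i.val < i₀.val then i.val else i.val - 1), by split_ifs <;> omega⟩, ?_⟩
    rw [extremal_eq_iff hk hkn i₀ i hi]

lemma extremal_cutL_i0 {n k : ℕ} (hk : 2 ≤ k) (hkn : k ≤ n) (i₀ : Fin k) (s : ℕ) (hs : s ≤ n) :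
    cutL (colorClass (extremal n k hk hkn i₀) i₀) s
      = min s ((n - k + 1) - (n - k + 1) / 2) + (s - (n - (n - k + 1) / 2)) := by
  set a := n - k + 1 with ha
  set q := a / 2 with hq
  set p := a - q with hp
  have hcc : (colorClass (extremal n k hk hkn i₀) i₀).filter (fun v => v.val < s)
      = Finset.univ.filter (fun v : Fin n => (v.val < p ∨ n - q ≤ v.val) ∧ v.val < s) := by
    rw [colorClass, Finset.filter_filter]
    apply Finset.filter_congr
    intro v _
    rw [extremal_eq_i0_iff hk hkn]
  rw [cutL, hcc]
  have h1 : (Finset.univ.filter (fun v : Fin n => (v.val < p ∨ n - q ≤ v.val) ∧ v.val < s)).card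
      = ((Finset.range n).filter (fun x => (x < p ∨ n - q ≤ x) ∧ x < s)).card :=
    card_filter_val (fun x => (x < p ∨ n - q ≤ x) ∧ x < s)
  rw [h1]
  have h2 : (Finset.range n).filter (fun x => (x < p ∨ n - q ≤ x) ∧ x < s)
      = Finset.range (min s p) ∪ Finset.Ico (n - q) s := by
    ext x
    simp only [Finset.mem_filter, Finset.mem_range, Finset.mem_union, Finset.mem_Ico]
    omega
  have h3 : Disjoint (Finset.range (min s p)) (Finset.Ico (n - q) s) := by
    rw [Finset.disjoint_left]
    intro x hx1 hx2
    rw [Finset.mem_range] at hx1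
    rw [Finset.mem_Ico] at hx2
    omega
  rw [h2, Finset.card_union_of_disjoint h3, Finset.card_range, Nat.card_Ico]

lemma extremal_card_i0 {n k : ℕ} (hk : 2 ≤ k) (hkn : k ≤ n) (i₀ : Fin k) :
    (colorClass (extremal n k hk hkn i₀) i₀).card = n - k + 1 := by
  have h1 : cutL (colorClass (extremal n k hk hkn i₀) i₀) n
      = (colorClass (extremal n k hk hkn i₀) i₀).card := by
    rw [cutL]
    congr 1
    apply Finset.filter_true_of_mem
    intro v _
    exact v.isLt
  rw [← h1, extremal_cutL_i0 hk hkn i₀ n le_rfl]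
  omega

lemma extremal_card_other {n k : ℕ} (hk : 2 ≤ k) (hkn : k ≤ n) (i₀ i : Fin k) (hi : i ≠ i₀) :
    (colorClass (extremal n k hk hkn i₀) i).card = 1 := by
  have h1 : i.val < k := i.isLt
  have h2 : i₀.val < k := i₀.isLt
  have h3 : i.val ≠ i₀.val := fun h => hi (Fin.ext h)
  set c := ((n - k + 1) - (n - k + 1) / 2)
    + (if i.val < i₀.val then i.val else i.val - 1) with hc
  have hcn : c < n := by rw [hc]; split_ifs <;> omega
  have hcc : colorClass (extremal n k hk hkn i₀) i
      = Finset.univ.filter (fun v : Fin n => v.val = c) := by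
    rw [colorClass]
    apply Finset.filter_congr
    intro v _
    rw [extremal_eq_iff hk hkn i₀ i hi, hc]
  rw [hcc]
  have h4 : (Finset.univ.filter (fun v : Fin n => v.val = c)).card
      = ((Finset.range n).filter (fun x => x = c)).card := card_filter_val (fun x => x = c)
  rw [h4]
  have h5 : (Finset.range n).filter (fun x => x = c) = {c} := by
    ext x
    simp only [Finset.mem_filter, Finset.mem_range, Finset.mem_singleton]
    omega
  rw [h5, Finset.card_singleton]

lemma extremal_cut_value {n k : ℕ} (hk : 2 ≤ k) (hkn : k ≤ n) (i₀ : Fin k)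
    (s : ℕ) (hs1 : 1 ≤ s) (hsn : s < n) :
    ∑ i : Fin k, cutL (colorClass (extremal n k hk hkn i₀) i) s
        * cutR (colorClass (extremal n k hk hkn i₀) i) s = phicut n k s := by
  set E := extremal n k hk hkn i₀ with hE
  rw [Finset.sum_eq_single i₀]
  · -- main term
    have hL := extremal_cutL_i0 hk hkn i₀ s (by omega)
    have hcard := extremal_card_i0 hk hkn i₀
    rw [← hE] at hL hcard
    have hRL := cutL_add_cutR (colorClass E i₀) s
    set a := n - k + 1 with ha
    set q := a / 2 with hq
    set p := a - q with hp
    set L := min s p + (s - (n - q)) with hLdef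
    have hLv : cutL (colorClass E i₀) s = L := hL
    have hRv : cutR (colorClass E i₀) s = a - L := by omega
    rw [hLv, hRv, phicut]
    set m := mcut n k s with hm
    have hmv : m = min s (min (n - s) q) := by rw [hm, mcut]
    have key : L = m ∨ L = a - m := by omega
    have hLa : L ≤ a := by omega
    have hma : m ≤ a := by omega
    rcases key with h | h
    · rw [h]
    · rw [h]
      have h6 : a - (a - m) = m := by omega
      rw [h6, Nat.mul_comm]
  · intro i _ hi
    have hcard := extremal_card_other hk hkn i₀ i hi
    rw [← hE] at hcard
    have hRL := cutL_add_cutR (colorClass E i)  s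
    have : cutL (colorClass E i) s = 0 ∨ cutR (colorClass E i) s = 0 := by omega
    rcases this with h | h <;> rw [h] <;> simp
  · intro h
    exact absurd (Finset.mem_univ i₀) h

lemma extremal_wiener {n k : ℕ} (hk : 2 ≤ k) (hkn : k ≤ n) (i₀ : Fin k) :
    wienerColoring (pathGraph n) (extremal n k hk hkn i₀) = wB n k := by
  rw [wienerColoring_eq, wB]
  refine Finset.sum_congr rfl fun s hs => ?_
  rw [Finset.mem_Ico] at hs
  exact extremal_cut_value hk hkn i₀ s hs.1 hs.2

/-! ### Strictness when there is no largest class -/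

lemma cut_one_strict {n k : ℕ} (hk : 2 ≤ k) (hkn : k ≤ n) (hn2 : k + 1 ≤ n)
    {f : Fin n → Fin k} (hf : Function.Surjective f)
    (hsmall : ∀ i : Fin k, (colorClass f i).card < n - k + 1) :
    ∑ i : Fin k, cutL (colorClass f i) 1 * cutR (colorClass f i) 1 < phicut n k 1 := by
  have hn0 : 0 < n := by omega
  set z : Fin n := ⟨0, hn0⟩ with hz
  have hzval : z.val = 0 := rfl
  have h0 : ∀ i, cutL (colorClass f i) 1 = if f z = i then 1 else 0 := by
    intro i
    rw [cutL, colorClass, Finset.filter_filter]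
    have heq : Finset.univ.filter (fun v : Fin n => f v = i ∧ v.val < 1)
        = if f z = i then {z} else ∅ := by
      ext v
      split_ifs with h
      · simp only [Finset.mem_filter, Finset.mem_univ, true_and, Finset.mem_singleton]
        constructor
        · rintro ⟨h1, h2⟩
          exact Fin.ext (by omega)
        · rintro rfl
          exact ⟨h, by omega⟩
      · simp only [Finset.mem_filter, Finset.mem_univ, true_and, Finset.notMem_empty,
          iff_false, not_and]
        intro h1 h2
        exact h (by rw [← h1]; congr 1; exact Fin.ext (by omega))
    rw [heq]
    split_ifs <;> simp
  have hphi : phicut n k 1 = (n - k + 1) - 1 := by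
    rw [phicut, mcut]
    have : min 1 (min (n - 1) ((n - k + 1) / 2)) = 1 := by omega
    rw [this, one_mul]
  calc ∑ i : Fin k, cutL (colorClass f i) 1 * cutR (colorClass f i) 1
      = cutL (colorClass f (f z)) 1 * cutR (colorClass f (f z)) 1 := by
        refine Finset.sum_eq_single (f z) (fun i _ hi => ?_) (fun h => absurd (Finset.mem_univ _) h)
        rw [h0 i, if_neg (fun h => hi h.symm), zero_mul]
    _ = cutR (colorClass f (f z)) 1 := by rw [h0 (f z), if_pos rfl, one_mul]
    _ < phicut n k 1 := by
        have hcard := hsmall (f z)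
        have hRL := cutL_add_cutR (colorClass f (f z)) 1
        have hL := h0 (f z)
        rw [if_pos rfl] at hL
        have hc1 := card_class_pos hf (f z)
        rw [hphi]
        omega

lemma wiener_lt_of_no_big {n k : ℕ} (hk : 2 ≤ k) (hkn : k ≤ n) (hn2 : k + 1 ≤ n)
    {f : Fin n → Fin k} (hf : Function.Surjective f)
    (hsmall : ∀ i : Fin k, (colorClass f i).card < n - k + 1) :
    wienerColoring (pathGraph n) f < wB n k := by
  rw [wienerColoring_eq, wB]
  refine Finset.sum_lt_sum (fun s hs => ?_) ⟨1, ?_, ?_⟩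
  · rw [Finset.mem_Ico] at hs
    exact cut_bound hk hf s (by omega)
  · rw [Finset.mem_Ico]
    omega
  · exact cut_one_strict hk hkn hn2 hf hsmall

end PathWienerAux

/-- For `2 ≤ k ≤ n` and `f` a `k`-color weak maximizer of `W` on `P_n`:
`W(f)` is maximal among `k`-color weak maximizers iff `f` has a color class of the
largest possible size `n − (k − 1)`; equivalently, iff `f` is a `k`-color maximizer of `W`
on `P_n` (i.e. `W(f) ≥ W(f')` for all surjective `f'`). -/
theorem path_max_weakMaximizer (n k : ℕ) (hk : 2 ≤ k) (hkn : k ≤ n)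
    (f : Fin n → Fin k) (hf : IsWeakMaximizer (SimpleGraph.pathGraph n) f) :
    ((∀ g : Fin n → Fin k, IsWeakMaximizer (SimpleGraph.pathGraph n) g →
        wienerColoring (SimpleGraph.pathGraph n) g
          ≤ wienerColoring (SimpleGraph.pathGraph n) f)
      ↔ ∃ i : Fin k, (colorClass f i).card = n - (k - 1))
    ∧ ((∀ g : Fin n → Fin k, IsWeakMaximizer (SimpleGraph.pathGraph n) g →
        wienerColoring (SimpleGraph.pathGraph n) g
          ≤ wienerColoring (SimpleGraph.pathGraph n) f)
      ↔ ∀ g : Fin n → Fin k, Function.Surjective g →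
          wienerColoring (SimpleGraph.pathGraph n) g
            ≤ wienerColoring (SimpleGraph.pathGraph n) f) := by
  obtain ⟨hfs, hfmax⟩ := hf
  have hk0 : 0 < k := by omega
  have hble : ∀ g : Fin n → Fin k, Function.Surjective g →
      wienerColoring (pathGraph n) g ≤ PathWienerAux.wB n k :=
    fun g hg => PathWienerAux.wiener_le_wB hk hg
  have hEW : ∀ i₀ : Fin k,
      wienerColoring (pathGraph n) (PathWienerAux.extremal n k hk hkn i₀)
        = PathWienerAux.wB n k :=
    fun i₀ => PathWienerAux.extremal_wiener hk hkn i₀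
  have hEweak : ∀ i₀ : Fin k,
      IsWeakMaximizer (pathGraph n) (PathWienerAux.extremal n k hk hkn i₀) := by
    intro i₀
    refine ⟨PathWienerAux.extremal_surjective hk hkn i₀, fun g hg _ => ?_⟩
    rw [hEW i₀]
    exact hble g hg
  have claim1 : (∀ g : Fin n → Fin k, IsWeakMaximizer (pathGraph n) g →
      wienerColoring (pathGraph n) g ≤ wienerColoring (pathGraph n) f) →
      ∃ i : Fin k, (colorClass f i).card = n - (k - 1) := by
    intro h
    have hBf : PathWienerAux.wB n k ≤ wienerColoring (pathGraph n) f := by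
      rw [← hEW ⟨0, hk0⟩]
      exact h _ (hEweak ⟨0, hk0⟩)
    by_contra hno
    push_neg at hno
    have hsmall : ∀ i, (colorClass f i).card < n - k + 1 := by
      intro i
      have h1 := PathWienerAux.card_class_le hfs i
      have h2 := hno i
      omega
    by_cases hnk : n = k
    · have h3 := PathWienerAux.card_class_pos hfs ⟨0, hk0⟩
      have h4 := hsmall ⟨0, hk0⟩
      omega
    · have hlt := PathWienerAux.wiener_lt_of_no_big hk hkn (by omega) hfs hsmall
      omega
  have claim2 : (∃ i : Fin k, (colorClass f i).card = n - (k - 1)) →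
      ∀ g : Fin n → Fin k, Function.Surjective g →
        wienerColoring (pathGraph n) g ≤ wienerColoring (pathGraph n) f := by
    rintro ⟨i₀, hi₀⟩ g hg
    have hi₀' : (colorClass f i₀).card = n - k + 1 := by omega
    have hones := PathWienerAux.card_classes_one hfs i₀ hi₀' hkn
    have htype : colorType (PathWienerAux.extremal n k hk hkn i₀) = colorType f := by
      rw [colorType, colorType]
      apply Multiset.map_congr rfl
      intro i _
      by_cases hi : i = i₀
      · subst hi
        rw [PathWienerAux.extremal_card_i0 hk hkn, hi₀']
      · rw [PathWienerAux.extremal_card_other hk hkn i₀ i hi, hones i hi]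
    have h1 : wienerColoring (pathGraph n) (PathWienerAux.extremal n k hk hkn i₀)
        ≤ wienerColoring (pathGraph n) f :=
      hfmax _ (PathWienerAux.extremal_surjective hk hkn i₀) htype
    calc wienerColoring (pathGraph n) g ≤ PathWienerAux.wB n k := hble g hg
    _ = wienerColoring (pathGraph n) (PathWienerAux.extremal n k hk hkn i₀) := (hEW i₀).symm
    _ ≤ wienerColoring (pathGraph n) f := h1
  constructor
  · exact ⟨claim1, fun hex g hg => claim2 hex g hg.1⟩
  · exact ⟨fun h => claim2 (claim1 h), fun h g hg => h g hg.1⟩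
end

section
/- Suppose f, f' : V(C_n) → {1,...,k} are k-color weak maximizers of the Wiener index W on C_n, type(f) = (n_1,...,n_k) written in non-decreasing order, 1 ≤ j ≤ j' ≤ k, and type(f') = R_{j,j'}(type(f)). If n is even and n_j = n_{j'} = 2a for some positive integer a, then W(f) = W(f'). -/
open SimpleGraph Finset

/-!
The `n = 2h` half-circles `{x | (x + i).val < h}` of `C_n` separate `u` from `v` (with `u` inside)
exactly `d(u, v)` times. Double counting therefore writes the Wiener index of `A` as half the sum,
over all half-circles `H`, of `|A ∩ H| * |A \ H|`, which is at most `h * ⌊|A|² / 4⌋`, with equality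
when every half-circle splits `A` evenly; this is the case as soon as all but at most one point of
`A` have their antipode in `A`. Listing the vertices so that antipodes are consecutive and cutting
the list into blocks of the prescribed sizes, even blocks first, attains the bound for every class
at once. So a weak maximizer of type `(n_i)` has `W = h * Σ ⌊n_i² / 4⌋`, and the transfer changes
this sum by `⌊(2a-1)²/4⌋ + ⌊(2a+1)²/4⌋ - 2⌊(2a)²/4⌋ = 0`.
-/

def quarterSquare (m : ℕ) : ℕ := m * m / 4

lemma mul_le_quarterSquare_add (b c : ℕ) : b * c ≤ quarterSquare (b + c) := by
  rw [quarterSquare, Nat.le_div_iff_mul_le four_pos]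
  nlinarith [sq_nonneg ((b : ℤ) - c)]

lemma mul_eq_quarterSquare_add {b c : ℕ} (hbc : b ≤ c + 1) (hcb : c ≤ b + 1) :
    b * c = quarterSquare (b + c) := by
  unfold quarterSquare
  obtain rfl | rfl | rfl : b = c + 1 ∨ b = c ∨ c = b + 1 := by omega
  · rw [show (c + 1 + c) * (c + 1 + c) = (c + 1) * c * 4 + 1 by ring]; omega
  · rw [show (b + b) * (b + b) = b * b * 4 by ring]; omega
  · rw [show (b + (b + 1)) * (b + (b + 1)) = b * (b + 1) * 4 + 1 by ring]; omega

lemma quarterSquare_two_mul_sub_one_add_quarterSquare_two_mul_add_one (a : ℕ) :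
    quarterSquare (2 * a - 1) + quarterSquare (2 * a + 1) = 2 * quarterSquare (2 * a) := by
  cases a with
  | zero => rfl
  | succ a =>
    rw [show 2 * (a + 1) - 1 = a + (a + 1) by omega,
      show 2 * (a + 1) + 1 = (a + 1) + (a + 2) by omega,
      show 2 * (a + 1) = (a + 1) + (a + 1) by omega,
      ← mul_eq_quarterSquare_add (b := a) (by omega) (by omega),
      ← mul_eq_quarterSquare_add (b := a + 1) (c := a + 2) (by omega) (by omega),
      ← mul_eq_quarterSquare_add (b := a + 1) (c := a + 1) (by omega) (by omega)]
    ring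

lemma card_filter_le_card_filter_not_add {α : Type*} [DecidableEq α] {σ : α → α}
    (hσ : Function.Involutive σ) {P : α → Prop} [DecidablePred P] (hP : ∀ x, P (σ x) ↔ ¬ P x)
    (A : Finset α) : #{x ∈ A | P x} ≤ #{x ∈ A | ¬ P x} + #{x ∈ A | σ x ∉ A} := by
  have hsplit := card_filter_add_card_filter_not (s := {x ∈ A | P x}) (fun x => σ x ∈ A)
  have hswap : #{x ∈ {x ∈ A | P x} | σ x ∈ A} = #{x ∈ {x ∈ A | ¬ P x} | σ x ∈ A} := by
    refine card_nbij' σ σ ?_ ?_ (fun x _ => hσ x) (fun x _ => hσ x) <;>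
      intro x hx <;> simp_all [hσ x]
  have hle₁ := card_filter_le {x ∈ A | ¬ P x} (fun x => σ x ∈ A)
  have hle₂ : #{x ∈ {x ∈ A | P x} | σ x ∉ A} ≤ #{x ∈ A | σ x ∉ A} :=
    card_le_card fun x hx => by simp_all
  omega

lemma card_filter_lt_and_not_lt_add_mod_eq_min {h d : ℕ} (hd : d < 2 * h) :
    #{s ∈ range (2 * h) | s < h ∧ ¬ (s + d) % (2 * h) < h} = min d (2 * h - d) := by
  have hset : {s ∈ range (2 * h) | s < h ∧ ¬ (s + d) % (2 * h) < h}
      = Ico (h - d) (min h (2 * h - d)) := by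
    ext s
    simp only [mem_filter, mem_range, mem_Ico]
    by_cases hs : s < h
    · rcases lt_or_ge (s + d) (2 * h) with H | H
      · rw [Nat.mod_eq_of_lt H]; omega
      · rw [Nat.mod_eq_sub_mod H, Nat.mod_eq_of_lt (by omega)]; omega
    · omega
  rw [hset, Nat.card_Ico]
  omega

lemma List.sum_map_set_add_apply_getElem {α M : Type*} [AddCommMonoid M] (f : α → M)
    (L : List α) {i : ℕ} (hi : i < L.length) (v : α) :
    ((L.set i v).map f).sum + f L[i] = (L.map f).sum + f v := by
  induction L generalizing i with
  | nil => simp at hi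
  | cons x L ih =>
    cases i with
    | zero =>
      simp only [List.set_cons_zero, List.map_cons, List.sum_cons, List.getElem_cons_zero]
      abel
    | succ i =>
      simp only [List.set_cons_succ, List.map_cons, List.sum_cons, List.getElem_cons_succ,
        add_assoc, ih (Nat.lt_of_succ_lt_succ hi)]

section colorType

variable {V : Type*} [Fintype V] {k : ℕ}

lemma card_colorType (u : V → Fin k) : Multiset.card (colorType u) = k := by
  simp [colorType]

lemma sum_colorType (u : V → Fin k) : (colorType u).sum = Fintype.card V := by
  rw [colorType, ← Finset.sum_eq_multiset_sum, ← card_univ,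
    card_eq_sum_card_fiberwise (f := u) (t := univ) fun x _ => mem_univ _]
  rfl

lemma pos_of_mem_colorType {u : V → Fin k} (hu : Function.Surjective u) {m : ℕ}
    (hm : m ∈ colorType u) : 0 < m := by
  obtain ⟨i, -, rfl⟩ := Multiset.mem_map.1 hm
  obtain ⟨x, rfl⟩ := hu i
  exact card_pos.2 ⟨x, by simp [colorClass]⟩

lemma sum_map_colorType {M : Type*} [AddCommMonoid M] (g : ℕ → M) (u : V → Fin k) :
    ((colorType u).map g).sum = ∑ i, g #(colorClass u i) := by
  rw [colorType, Multiset.map_map, Finset.sum_eq_multiset_sum]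
  rfl

end colorType

theorem Composition.exists_blocks_eq_even_sizeUpTo {n : ℕ} (t : Multiset ℕ)
    (hpos : ∀ m ∈ t, 0 < m) (hsum : t.sum = n) :
    ∃ c : Composition n, (c.blocks : Multiset ℕ) = t ∧
      ∀ i : Fin c.length, Even (c.sizeUpTo i) ∨ Even (c.sizeUpTo (i + 1)) := by
  set E := (t.filter Even).toList
  set O := (t.filter (¬ Even ·)).toList
  have hEO : ((E ++ O : List ℕ) : Multiset ℕ) = t := by
    rw [← Multiset.coe_add, Multiset.coe_toList, Multiset.coe_toList, Multiset.filter_add_not]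
  refine ⟨⟨E ++ O, fun hm => hpos _ (hEO ▸ Multiset.mem_coe.2 hm),
    by rw [← Multiset.sum_coe, hEO, hsum]⟩, hEO, fun i => ?_⟩
  have hi : (i : ℕ) < (E ++ O).length := i.2
  simp only [Composition.sizeUpTo]
  by_cases hiE : (i : ℕ) ≤ E.length
  · left
    rw [List.take_append_of_le_length hiE, even_iff_two_dvd]
    refine List.dvd_sum fun m hm => even_iff_two_dvd.1 ?_
    exact (by simpa [E] using List.mem_of_mem_take hm : m ∈ t ∧ Even m).2
  · have hodd : Odd (E ++ O)[(i : ℕ)] := by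
      rw [List.getElem_append_right (by omega)]
      have hiO : (i : ℕ) - E.length < O.length := by rw [List.length_append] at hi; omega
      have hmem := Multiset.mem_toList.1 (List.getElem_mem hiO)
      exact Nat.not_even_iff_odd.1 (Multiset.mem_filter.1 hmem).2
    rw [List.sum_take_succ _ _ hi]
    rcases Nat.even_or_odd ((E ++ O).take i).sum with hs | hs
    · exact Or.inl hs
    · exact Or.inr (hs.add_odd hodd)

namespace cycleGraphZMod

variable {n : ℕ}

lemma adj_iff {u v : ZMod n} :
    (cycleGraphZMod n).Adj u v ↔ u ≠ v ∧ (v = u + 1 ∨ u = v + 1) := by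
  simp [cycleGraphZMod, SimpleGraph.fromRel_adj]

section distance

variable [Fact (1 < n)]

lemma adj_add_one (x : ZMod n) : (cycleGraphZMod n).Adj x (x + 1) :=
  adj_iff.2 ⟨by simp, Or.inl rfl⟩

lemma exists_walk_add_natCast_length_eq (u : ZMod n) (m : ℕ) :
    ∃ w : (cycleGraphZMod n).Walk u (u + m), w.length = m := by
  induction m with
  | zero => exact ⟨Walk.nil.copy rfl (by simp), by simp⟩
  | succ m ih =>
    obtain ⟨w, hw⟩ := ih
    exact ⟨(w.concat (adj_add_one _)).copy rfl (by push_cast; ring), by simp [hw]⟩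

lemma natAbs_valMinAbs_sub_le_length {u v : ZMod n} (w : (cycleGraphZMod n).Walk u v) :
    (v - u).valMinAbs.natAbs ≤ w.length := by
  induction w with
  | nil => simp
  | @cons a b c hab w ih =>
    have hone : (1 : ZMod n).valMinAbs.natAbs ≤ 1 := by
      rw [ZMod.valMinAbs_natAbs_eq_min, ZMod.val_one]
      exact min_le_left _ _
    have hstep : (b - a).valMinAbs.natAbs ≤ 1 := by
      rcases (adj_iff.1 hab).2 with rfl | rfl
      · rwa [add_sub_cancel_left]
      · rwa [sub_add_cancel_left, ZMod.natAbs_valMinAbs_neg]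
    calc (c - a).valMinAbs.natAbs = ((c - b) + (b - a)).valMinAbs.natAbs := by
          rw [sub_add_sub_cancel]
      _ ≤ (c - b).valMinAbs.natAbs + (b - a).valMinAbs.natAbs :=
        (ZMod.natAbs_valMinAbs_add_le _ _).trans (Int.natAbs_add_le _ _)
      _ ≤ (w.cons hab).length := by rw [Walk.length_cons]; omega

lemma exists_walk_add_intCast_length_eq (u : ZMod n) (z : ℤ) :
    ∃ w : (cycleGraphZMod n).Walk u (u + z), w.length = z.natAbs := by
  obtain ⟨m, rfl | rfl⟩ := z.eq_nat_or_neg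
  · obtain ⟨w, hw⟩ := exists_walk_add_natCast_length_eq u m
    exact ⟨w.copy rfl (by simp), by simpa using hw⟩
  · obtain ⟨w, hw⟩ := exists_walk_add_natCast_length_eq (u - (m : ZMod n)) m
    exact ⟨w.reverse.copy (by simp) (by simp [sub_eq_add_neg]), by simpa using hw⟩

theorem dist_eq (u v : ZMod n) :
    (cycleGraphZMod n).dist u v = (v - u).valMinAbs.natAbs := by
  have hv : u + ((v - u).valMinAbs : ZMod n) = v := by rw [ZMod.coe_valMinAbs, add_sub_cancel]
  obtain ⟨w, hw⟩ := exists_walk_add_intCast_length_eq u (v - u).valMinAbs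
  obtain ⟨w', hw'⟩ := Reachable.exists_walk_length_eq_dist ⟨w.copy rfl hv⟩
  refine le_antisymm ?_ (hw' ▸ natAbs_valMinAbs_sub_le_length w')
  simpa [hw] using dist_le (w.copy rfl hv)

end distance

section halfCircles

variable {h : ℕ} [NeZero n]

theorem card_filter_val_add_lt_and_not_eq_dist (hn : n = 2 * h) (u v : ZMod n) :
    #{i : ZMod n | (u + i).val < h ∧ ¬ (v + i).val < h} = (cycleGraphZMod n).dist u v := by
  have : Fact (1 < n) := ⟨by have := NeZero.ne n; omega⟩
  have hv : ∀ i : ZMod n, (v + i).val = ((u + i).val + (v - u).val) % n := fun i => by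
    rw [← ZMod.val_add]; ring_nf
  rw [dist_eq, ZMod.valMinAbs_natAbs_eq_min]
  calc #{i : ZMod n | (u + i).val < h ∧ ¬ (v + i).val < h}
      = #{s ∈ range n | s < h ∧ ¬ (s + (v - u).val) % n < h} := by
        refine card_nbij' (fun i => (u + i).val) (fun s => (s : ZMod n) - u) ?_ ?_ ?_ ?_
        · intro i hi
          simp only [coe_filter, Set.mem_ofPred_eq, mem_univ, true_and, hv] at hi ⊢
          exact ⟨mem_range.2 (ZMod.val_lt _), hi⟩
        · intro s hs
          simp only [coe_filter, mem_range, Set.mem_ofPred_eq, mem_univ, true_and] at hs ⊢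
          rw [hv, add_sub_cancel, ZMod.val_cast_of_lt hs.1]
          exact hs.2
        · intro i _
          simp
        · intro s hs
          simp only [coe_filter, mem_range, Set.mem_ofPred_eq] at hs
          simp [ZMod.val_cast_of_lt hs.1]
    _ = min (v - u).val (n - (v - u).val) := by
        subst hn
        exact card_filter_lt_and_not_lt_add_mod_eq_min (ZMod.val_lt _)

theorem sum_offDiag_dist_eq (hn : n = 2 * h) (A : Finset (ZMod n)) :
    ∑ p ∈ A.offDiag, (cycleGraphZMod n).dist p.1 p.2
      = ∑ i : ZMod n, #{x ∈ A | (x + i).val < h} * #{x ∈ A | ¬ (x + i).val < h} := by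
  calc ∑ p ∈ A.offDiag, (cycleGraphZMod n).dist p.1 p.2
      = ∑ p ∈ A ×ˢ A, (cycleGraphZMod n).dist p.1 p.2 := by
        refine sum_subset (fun p hp => ?_) (fun p hp hp' => ?_)
        · rw [mem_offDiag] at hp
          exact mem_product.2 ⟨hp.1, hp.2.1⟩
        · rw [mem_product] at hp
          rw [mem_offDiag] at hp'
          have : p.1 = p.2 := by tauto
          rw [this, dist_self]
    _ = ∑ p ∈ A ×ˢ A, #{i : ZMod n | (p.1 + i).val < h ∧ ¬ (p.2 + i).val < h} :=
        sum_congr rfl fun p _ => (card_filter_val_add_lt_and_not_eq_dist hn p.1 p.2).symm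
    _ = ∑ i : ZMod n, #{p ∈ A ×ˢ A | (p.1 + i).val < h ∧ ¬ (p.2 + i).val < h} :=
        sum_card_bipartiteAbove_eq_sum_card_bipartiteBelow _
    _ = ∑ i : ZMod n, #{x ∈ A | (x + i).val < h} * #{x ∈ A | ¬ (x + i).val < h} := by
        refine sum_congr rfl fun i _ => ?_
        rw [filter_product (fun x => (x + i).val < h) (fun x => ¬ (x + i).val < h), card_product]

lemma val_add_half (hn : n = 2 * h) (x : ZMod n) :
    (x + (h : ZMod n)).val = if x.val < h then x.val + h else x.val - h := by
  have hx := ZMod.val_lt x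
  rw [ZMod.val_add, ZMod.val_natCast, Nat.mod_eq_of_lt (by omega : h < n)]
  split_ifs with H
  · exact Nat.mod_eq_of_lt (by omega)
  · rw [Nat.mod_eq_sub_mod (by omega), Nat.mod_eq_of_lt (by omega)]; omega

lemma val_add_half_lt_iff (hn : n = 2 * h) (x : ZMod n) : (x + h).val < h ↔ ¬ x.val < h := by
  have := ZMod.val_lt x
  rw [val_add_half hn]
  split_ifs <;> omega

theorem wienerSet_le (hn : n = 2 * h) (A : Finset (ZMod n)) :
    wienerSet (cycleGraphZMod n) A ≤ h * quarterSquare #A := by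
  rw [wienerSet, sum_offDiag_dist_eq hn, Nat.div_le_iff_le_mul_add_pred two_pos]
  calc ∑ i : ZMod n, #{x ∈ A | (x + i).val < h} * #{x ∈ A | ¬ (x + i).val < h}
      ≤ ∑ _i : ZMod n, quarterSquare #A := sum_le_sum fun i _ => by
        rw [← card_filter_add_card_filter_not (s := A) (fun x => (x + i).val < h)]
        exact mul_le_quarterSquare_add _ _
    _ ≤ 2 * (h * quarterSquare #A) + (2 - 1) := by
        rw [sum_const, card_univ, ZMod.card, smul_eq_mul]
        generalize quarterSquare #A = q
        rw [hn, mul_assoc]; omega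

theorem wienerSet_eq_of_card_filter_add_half_notMem_le_one (hn : n = 2 * h) (A : Finset (ZMod n))
    (hA : #{x ∈ A | x + (h : ZMod n) ∉ A} ≤ 1) :
    wienerSet (cycleGraphZMod n) A = h * quarterSquare #A := by
  have hhalf : (h : ZMod n) + h = 0 := by
    rw [← Nat.cast_add, ← two_mul, ← hn, ZMod.natCast_self]
  have hσ : Function.Involutive (· + (h : ZMod n)) := fun x => by
    simp only [add_assoc, hhalf, add_zero]
  have hbalanced : ∀ i : ZMod n,
      #{x ∈ A | (x + i).val < h} * #{x ∈ A | ¬ (x + i).val < h} = quarterSquare #A := by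
    intro i
    have hP : ∀ x : ZMod n, (x + h + i).val < h ↔ ¬ (x + i).val < h := fun x => by
      rw [add_right_comm]; exact val_add_half_lt_iff hn _
    have h₁ := card_filter_le_card_filter_not_add hσ (P := fun x => (x + i).val < h) hP A
    have h₂ := card_filter_le_card_filter_not_add hσ (P := fun x => ¬ (x + i).val < h)
      (fun x => not_congr (hP x)) A
    simp only [not_not] at h₂
    rw [← card_filter_add_card_filter_not (s := A) (fun x => (x + i).val < h)]
    exact mul_eq_quarterSquare_add (by omega) (by omega)
  rw [wienerSet, sum_offDiag_dist_eq hn, sum_congr rfl fun i _ => hbalanced i, sum_const,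
    card_univ, ZMod.card, smul_eq_mul]
  generalize quarterSquare #A = q
  rw [hn, mul_assoc, Nat.mul_div_cancel_left _ two_pos]

def antipodalRank (h : ℕ) (x : ZMod n) : ℕ :=
  if x.val < h then 2 * x.val else 2 * (x.val - h) + 1

lemma antipodalRank_lt (hn : n = 2 * h) (x : ZMod n) : antipodalRank h x < n := by
  have := ZMod.val_lt x
  unfold antipodalRank; split_ifs <;> omega

lemma antipodalRank_injective (h : ℕ) : Function.Injective (antipodalRank (n := n) h) := by
  intro x y hxy
  apply ZMod.val_injective
  unfold antipodalRank at hxy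
  split_ifs at hxy <;> omega

lemma antipodalRank_add_half (hn : n = 2 * h) (x : ZMod n) :
    antipodalRank h (x + (h : ZMod n)) / 2 = antipodalRank h x / 2 ∧
      antipodalRank h (x + (h : ZMod n)) ≠ antipodalRank h x := by
  have := ZMod.val_lt x
  unfold antipodalRank
  rw [val_add_half hn]
  split_ifs <;> omega

def blockColoring (hn : n = 2 * h) (c : Composition n) (x : ZMod n) : Fin c.length :=
  c.index ⟨antipodalRank h x, antipodalRank_lt hn x⟩

variable (hn : n = 2 * h) (c : Composition n)

lemma blockColoring_eq_iff {x : ZMod n} {i : Fin c.length} :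
    blockColoring hn c x = i ↔
      c.sizeUpTo i ≤ antipodalRank h x ∧ antipodalRank h x < c.sizeUpTo (i + 1) := by
  rw [blockColoring, eq_comm, ← c.mem_range_embedding_iff', c.mem_range_embedding_iff]

lemma card_colorClass_blockColoring (i : Fin c.length) :
    #(colorClass (blockColoring hn c) i) = c.blocksFun i := by
  have hbij : Function.Bijective
      fun x : ZMod n => (⟨antipodalRank h x, antipodalRank_lt hn x⟩ : Fin n) :=
    (Fintype.bijective_iff_injective_and_card _).2
      ⟨fun x y hxy => antipodalRank_injective h (Fin.ext_iff.1 hxy), by simp⟩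
  calc #(colorClass (blockColoring hn c) i)
      = #{j : Fin n | c.index j = i} := card_bijective _ hbij fun x => by
        unfold colorClass blockColoring
        rw [mem_filter, mem_filter]
        simp only [mem_univ, true_and]
    _ = #(univ.map (c.embedding i).toEmbedding) := by
        congr 1; ext j; simp [eq_comm (a := c.index j), ← c.mem_range_embedding_iff']
    _ = c.blocksFun i := by simp

lemma blockColoring_surjective : Function.Surjective (blockColoring hn c) := fun i => by
  obtain ⟨x, hx⟩ :=
    card_pos.1 ((card_colorClass_blockColoring hn c i).symm ▸ c.one_le_blocksFun i)
  exact ⟨x, (mem_filter.1 hx).2⟩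

lemma colorType_blockColoring : colorType (blockColoring hn c) = c.blocks := by
  simp only [colorType, Fin.univ_val_map, card_colorClass_blockColoring, c.ofFn_blocksFun]

theorem wienerColoring_blockColoring
    (hc : ∀ i : Fin c.length, Even (c.sizeUpTo i) ∨ Even (c.sizeUpTo (i + 1))) :
    wienerColoring (cycleGraphZMod n) (blockColoring hn c)
      = h * (c.blocks.map quarterSquare).sum := by
  -- A block of ranks with an even end point meets every antipodal pair `{2s, 2s + 1}` of ranks
  -- in zero or two elements, except possibly at its other end.
  have hclass : ∀ i, #{x ∈ colorClass (blockColoring hn c) i |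
      x + (h : ZMod n) ∉ colorClass (blockColoring hn c) i} ≤ 1 := fun i => by
    refine card_le_one.2 fun x hx y hy => antipodalRank_injective h ?_
    simp only [colorClass, mem_filter, mem_univ, true_and, blockColoring_eq_iff] at hx hy
    have := antipodalRank_add_half hn x
    have := antipodalRank_add_half hn y
    rcases hc i with ⟨r, hr⟩ | ⟨r, hr⟩ <;> omega
  rw [wienerColoring, ← c.ofFn_blocksFun, List.map_ofFn, List.sum_ofFn, mul_sum]
  refine sum_congr rfl fun i _ => ?_
  rw [wienerSet_eq_of_card_filter_add_half_notMem_le_one hn _ (hclass i),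
    card_colorClass_blockColoring]
  rfl

theorem wienerColoring_le (hn : n = 2 * h) {k : ℕ} (u : ZMod n → Fin k) :
    wienerColoring (cycleGraphZMod n) u ≤ h * ((colorType u).map quarterSquare).sum := by
  rw [sum_map_colorType, mul_sum]
  exact sum_le_sum fun i _ => wienerSet_le hn _

theorem wienerColoring_eq_of_isWeakMaximizer (hn : n = 2 * h) {k : ℕ} {u : ZMod n → Fin k}
    (hu : IsWeakMaximizer (cycleGraphZMod n) u) :
    wienerColoring (cycleGraphZMod n) u = h * ((colorType u).map quarterSquare).sum := by
  refine le_antisymm (wienerColoring_le hn u) ?_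
  obtain ⟨c, hct, hc⟩ := Composition.exists_blocks_eq_even_sizeUpTo (colorType u)
    (fun _ => pos_of_mem_colorType hu.1) (by rw [sum_colorType, ZMod.card])
  obtain rfl : c.length = k := by
    rw [← card_colorType u, ← hct, Multiset.coe_card, Composition.blocks_length]
  calc h * ((colorType u).map quarterSquare).sum
      = wienerColoring (cycleGraphZMod n) (blockColoring hn c) := by
        rw [wienerColoring_blockColoring hn c hc, ← hct, Multiset.map_coe, Multiset.sum_coe]
    _ ≤ wienerColoring (cycleGraphZMod n) u :=
        hu.2 _ (blockColoring_surjective hn c) ((colorType_blockColoring hn c).trans hct)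

end halfCircles

end cycleGraphZMod

theorem sum_map_quarterSquare_rhTransfer {L : List ℕ} {j j' a : ℕ} (ha : 0 < a)
    (hj : L.getD j 0 = 2 * a) (hj' : L.getD j' 0 = 2 * a) :
    ((rhTransfer L j j').map quarterSquare).sum = ((L : Multiset ℕ).map quarterSquare).sum := by
  have hjL : j < L.length := by
    by_contra H; rw [List.getD_eq_default _ _ (not_lt.1 H)] at hj; omega
  have hj'L : j' < L.length := by
    by_contra H; rw [List.getD_eq_default _ _ (not_lt.1 H)] at hj'; omega
  rw [List.getD_eq_getElem _ _ hjL] at hj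
  rw [List.getD_eq_getElem _ _ hj'L] at hj'
  simp only [rhTransfer, Multiset.map_coe, Multiset.sum_coe]
  rw [List.getD_eq_getElem _ _ hjL, hj]
  rcases eq_or_ne j j' with rfl | hne
  · rw [List.getD_eq_getElem _ _ (by simpa), List.getElem_set_self, List.set_set,
      Nat.sub_add_cancel (by omega), ← hj, List.set_getElem_self]
  · rw [List.getD_eq_getElem _ _ (by simpa), List.getElem_set_ne hne, hj']
    have h₁ := List.sum_map_set_add_apply_getElem quarterSquare (L.set j (2 * a - 1))
      (i := j') (by simpa) (2 * a + 1)
    have h₂ := List.sum_map_set_add_apply_getElem quarterSquare L hjL (2 * a - 1)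
    rw [List.getElem_set_ne hne, hj'] at h₁
    rw [hj] at h₂
    have := quarterSquare_two_mul_sub_one_add_quarterSquare_two_mul_add_one a
    omega

theorem cycle_transfer_eq_general (n k : ℕ) [NeZero n] (f f' : ZMod n → Fin k)
    (hf : IsWeakMaximizer (cycleGraphZMod n) f)
    (hf' : IsWeakMaximizer (cycleGraphZMod n) f')
    (j j' : ℕ)
    (htype : colorType f' = rhTransfer ((colorType f).sort (· ≤ ·)) j j')
    (hn : Even n) (a : ℕ) (ha : 0 < a)
    (hnj : ((colorType f).sort (· ≤ ·)).getD j 0 = 2 * a)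
    (hnj' : ((colorType f).sort (· ≤ ·)).getD j' 0 = 2 * a) :
    wienerColoring (cycleGraphZMod n) f = wienerColoring (cycleGraphZMod n) f' := by
  obtain ⟨h, hh⟩ := hn.two_dvd
  rw [cycleGraphZMod.wienerColoring_eq_of_isWeakMaximizer hh hf,
    cycleGraphZMod.wienerColoring_eq_of_isWeakMaximizer hh hf', htype,
    sum_map_quarterSquare_rhTransfer ha hnj hnj', Multiset.sort_eq]

/-- If `f, f'` are `k`-color weak maximizers of `W` on `C_n` with
`type(f') = R_{j,j'}(type(f))` (indices zero-based, `j ≤ j' < k`), `n` even and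
`n_j = n_{j'} = 2a` for a positive integer `a`, then `W(f) = W(f')`. -/
theorem cycle_transfer_eq (n k : ℕ) [NeZero n] (f f' : ZMod n → Fin k)
    (hf : IsWeakMaximizer (cycleGraphZMod n) f)
    (hf' : IsWeakMaximizer (cycleGraphZMod n) f')
    (j j' : ℕ) (hjj' : j ≤ j') (hj'k : j' < k)
    (htype : colorType f' = rhTransfer ((colorType f).sort (· ≤ ·)) j j')
    (hn : Even n) (a : ℕ) (ha : 0 < a)
    (hnj : ((colorType f).sort (· ≤ ·)).getD j 0 = 2 * a)
    (hnj' : ((colorType f).sort (· ≤ ·)).getD j' 0 = 2 * a) :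
    wienerColoring (cycleGraphZMod n) f = wienerColoring (cycleGraphZMod n) f' :=
  cycle_transfer_eq_general n k f f' hf hf' j j' htype hn a ha hnj hnj'
end

section
/- Suppose 2 ≤ k ≤ n are integers with n even and n − k ≤ 2, and f : V(C_n) → {1,...,k} is a k-color weak maximizer of the Wiener index W on C_n. Then W(f) = max{ W(f') : f' a k-color weak maximizer of W on C_n }. -/
open SimpleGraph Finset

/-!
Every colour class of a surjective `k`-colouring of `C_n` has at most `n - k + 1 ≤ 3` vertices.
Two vertices of `C_n` are at distance at most `n / 2`, and the three pairwise distances of three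
vertices add up to at most `n`, so for even `n` every surjective colouring has
`W ≤ (n - k) * (n / 2)`. A weak maximizer `f` attains this bound: permuting the vertices does not
change the type, so `f` is at least as good as the colouring that moves a class of size two onto
the antipodal pair `{0, n/2}`, a class of size three onto `{0, n/2, 1}`, or two classes of size
two onto `{0, n/2}` and `{1, 1 + n/2}`. Hence all weak maximizers have `W = (n - k) * (n / 2)`.
-/

namespace ZMod

variable {n : ℕ}

theorem natAbs_valMinAbs_add_le_add (a b : ZMod n) :
    (a + b).valMinAbs.natAbs ≤ a.valMinAbs.natAbs + b.valMinAbs.natAbs :=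
  (natAbs_valMinAbs_add_le a b).trans (Int.natAbs_add_le _ _)

theorem natAbs_valMinAbs_one_le : (1 : ZMod n).valMinAbs.natAbs ≤ 1 := by
  rcases n with _ | n
  · simp
  · rw [valMinAbs_natAbs_eq_min, val_one_eq_one_mod]
    exact (min_le_left _ _).trans (Nat.mod_le _ _)

theorem natAbs_valMinAbs_add_add_le [NeZero n] {a b c : ZMod n} (h : a + b + c = 0) :
    a.valMinAbs.natAbs + b.valMinAbs.natAbs + c.valMinAbs.natAbs ≤ n := by
  simp only [valMinAbs_natAbs_eq_min]
  -- `a.val + b.val + c.val` is `0`, `n` or `2n`: bound each `min x.val (n - x.val)` by `x.val`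
  -- in the first two cases and by `n - x.val` in the last.
  obtain ⟨q, hq⟩ : n ∣ a.val + b.val + c.val := by
    rw [← natCast_eq_zero_iff]; push_cast; simpa only [natCast_val, cast_id] using h
  have ha := a.val_lt; have hb := b.val_lt; have hc := c.val_lt
  have hq3 : q < 3 := by nlinarith
  interval_cases q <;> omega

theorem injective_natCast_comp_of_lt {ι : Type*} {e : ι → ℕ} (he : e.Injective)
    (hlt : ∀ i, e i < n) : (fun i => (e i : ZMod n)).Injective := fun i j h =>
  he (by simpa [val_natCast_of_lt (hlt _)] using congrArg val h)

end ZMod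

section CycleGraph

variable {n : ℕ}

theorem cycleGraphZMod_adj_add_one (hn : 1 < n) (u : ZMod n) :
    (cycleGraphZMod n).Adj u (u + 1) := by
  have : Fact (1 < n) := ⟨hn⟩
  rw [cycleGraphZMod, fromRel_adj]
  exact ⟨fun h => one_ne_zero (add_eq_left.1 h.symm), Or.inl rfl⟩

theorem exists_walk_cycleGraphZMod_add (hn : 1 < n) (u : ZMod n) (m : ℕ) :
    ∃ p : (cycleGraphZMod n).Walk u (u + m), p.length = m := by
  induction m with
  | zero => exact ⟨Walk.nil.copy rfl (by simp), by simp⟩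
  | succ m ih =>
    obtain ⟨p, hp⟩ := ih
    exact ⟨(p.concat (cycleGraphZMod_adj_add_one hn _)).copy rfl (by push_cast; ring),
      by simp [hp]⟩

theorem natAbs_valMinAbs_sub_le_length {u v : ZMod n} (p : (cycleGraphZMod n).Walk u v) :
    (v - u).valMinAbs.natAbs ≤ p.length := by
  induction p with
  | nil => simp
  | @cons u w v h q ih =>
    have hstep : (w - u).valMinAbs.natAbs ≤ 1 := by
      obtain ⟨-, rfl | rfl⟩ := (fromRel_adj _ _ _).1 h
      · rw [add_sub_cancel_left]
        exact ZMod.natAbs_valMinAbs_one_le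
      · rw [sub_add_cancel_left, ZMod.natAbs_valMinAbs_neg]
        exact ZMod.natAbs_valMinAbs_one_le
    have htri := ZMod.natAbs_valMinAbs_add_le_add (v - w) (w - u)
    rw [sub_add_sub_cancel] at htri
    rw [Walk.length_cons]
    omega

theorem dist_cycleGraphZMod_add_le (hn : 1 < n) (u : ZMod n) (m : ℕ) :
    (cycleGraphZMod n).dist u (u + m) ≤ m := by
  obtain ⟨p, hp⟩ := exists_walk_cycleGraphZMod_add hn u m
  exact (dist_le p).trans_eq hp

theorem cycleGraphZMod_preconnected (hn : 1 < n) : (cycleGraphZMod n).Preconnected := fun u v => by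
  have : NeZero n := ⟨by omega⟩
  obtain ⟨p, -⟩ := exists_walk_cycleGraphZMod_add hn u (v - u).val
  rw [ZMod.natCast_zmod_val, add_sub_cancel] at p
  exact p.reachable

theorem dist_cycleGraphZMod (hn : 1 < n) (u v : ZMod n) :
    (cycleGraphZMod n).dist u v = (v - u).valMinAbs.natAbs := by
  have : NeZero n := ⟨by omega⟩
  refine le_antisymm ?_ ?_
  · have h := ZMod.natCast_natAbs_valMinAbs (v - u)
    split_ifs at h
    · calc (cycleGraphZMod n).dist u v
          = (cycleGraphZMod n).dist u (u + ((v - u).valMinAbs.natAbs : ℕ)) := by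
            rw [h, add_sub_cancel]
        _ ≤ _ := dist_cycleGraphZMod_add_le hn u _
    · calc (cycleGraphZMod n).dist u v
          = (cycleGraphZMod n).dist v (v + ((v - u).valMinAbs.natAbs : ℕ)) := by
            rw [h, neg_sub, add_sub_cancel, SimpleGraph.dist_comm]
        _ ≤ _ := dist_cycleGraphZMod_add_le hn v _
  · obtain ⟨p, hp⟩ := (cycleGraphZMod_preconnected hn u v).exists_walk_length_eq_dist
    exact hp ▸ natAbs_valMinAbs_sub_le_length p

theorem dist_cycleGraphZMod_le_half (hn : 1 < n) (u v : ZMod n) :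
    (cycleGraphZMod n).dist u v ≤ n / 2 := by
  have : NeZero n := ⟨by omega⟩
  rw [dist_cycleGraphZMod hn]
  exact ZMod.natAbs_valMinAbs_le _

theorem dist_cycleGraphZMod_triangle (hn : 1 < n) (u v w : ZMod n) :
    (cycleGraphZMod n).dist u w ≤
      (cycleGraphZMod n).dist u v + (cycleGraphZMod n).dist v w := by
  rw [dist_cycleGraphZMod hn, dist_cycleGraphZMod hn, dist_cycleGraphZMod hn, add_comm,
    ← sub_add_sub_cancel w v u]
  exact ZMod.natAbs_valMinAbs_add_le_add _ _

theorem dist_add_dist_add_dist_cycleGraphZMod_le (hn : 1 < n) (u v w : ZMod n) :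
    (cycleGraphZMod n).dist u v + (cycleGraphZMod n).dist u w
      + (cycleGraphZMod n).dist v w ≤ n := by
  have : NeZero n := ⟨by omega⟩
  rw [dist_cycleGraphZMod hn, dist_cycleGraphZMod hn, dist_cycleGraphZMod hn,
    ← ZMod.natAbs_valMinAbs_neg (w - u), neg_sub]
  exact ZMod.natAbs_valMinAbs_add_add_le (by ring)

theorem dist_cycleGraphZMod_natCast_add_half (hn : 1 < n) (a : ℕ) :
    (cycleGraphZMod n).dist (a : ZMod n) ((a + n / 2 : ℕ) : ZMod n) = n / 2 := by
  rw [dist_cycleGraphZMod hn, Nat.cast_add, add_sub_cancel_left,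
    ZMod.valMinAbs_natCast_of_le_half le_rfl, Int.natAbs_natCast]

end CycleGraph

section WienerSet

variable {V : Type*} [DecidableEq V] (G : SimpleGraph V)

theorem sum_offDiag_dist (A : Finset V) :
    ∑ p ∈ A.offDiag, G.dist p.1 p.2 = ∑ x ∈ A, ∑ y ∈ A, G.dist x y := by
  rw [← sum_product', ← diag_union_offDiag, sum_union (disjoint_diag_offDiag A),
    sum_eq_zero (s := A.diag) fun p hp => by rw [(mem_diag.1 hp).2, dist_self], zero_add]

variable [Fintype V]

theorem wienerSet_mono {A B : Finset V} (h : A ⊆ B) : wienerSet G A ≤ wienerSet G B :=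
  Nat.div_le_div_right (sum_le_sum_of_subset (offDiag_mono h))

theorem wienerSet_eq_zero_of_card_le_one {A : Finset V} (h : A.card ≤ 1) :
    wienerSet G A = 0 := by
  have : A.offDiag = ∅ := by
    rw [← card_eq_zero, offDiag_card]
    exact Nat.sub_eq_zero_of_le (by nlinarith)
  rw [wienerSet, this, sum_empty, Nat.zero_div]

theorem wienerSet_pair {u v : V} (h : u ≠ v) : wienerSet G {u, v} = G.dist u v := by
  rw [wienerSet, sum_offDiag_dist, sum_pair h, sum_pair h, sum_pair h, dist_self, dist_self,
    G.dist_comm (u := v)]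
  omega

theorem wienerSet_triple {u v w : V} (huv : u ≠ v) (huw : u ≠ w) (hvw : v ≠ w) :
    wienerSet G {u, v, w} = G.dist u v + G.dist u w + G.dist v w := by
  have hu : u ∉ ({v, w} : Finset V) := by simp [huv, huw]
  rw [wienerSet, sum_offDiag_dist]
  simp only [sum_insert hu, sum_pair hvw, dist_self, G.dist_comm (u := v) (v := u),
    G.dist_comm (u := w) (v := u), G.dist_comm (u := w) (v := v)]
  omega

end WienerSet

section Coloring

variable {V : Type*} [Fintype V] {k : ℕ}

@[simp]
theorem mem_colorClass {f : V → Fin k} {v : V} {i : Fin k} :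
    v ∈ colorClass f i ↔ f v = i := by
  simp [colorClass]

theorem sum_card_colorClass (f : V → Fin k) :
    ∑ i, (colorClass f i).card = Fintype.card V :=
  (card_eq_sum_card_fiberwise fun x _ => mem_univ (f x)).symm

theorem sum_card_colorClass_sub_one {f : V → Fin k} (hf : Function.Surjective f) :
    ∑ i, ((colorClass f i).card - 1) = Fintype.card V - k := by
  have hpos (i : Fin k) : 1 ≤ (colorClass f i).card := by
    obtain ⟨v, hv⟩ := hf i
    exact card_pos.2 ⟨v, mem_colorClass.2 hv⟩
  have := sum_card_colorClass f
  rw [← sum_congr rfl fun i _ => Nat.sub_add_cancel (hpos i), sum_add_distrib] at this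
  simp only [sum_const, card_univ, Fintype.card_fin, smul_eq_mul, mul_one] at this
  omega

theorem exists_two_le_card_colorClass {f : V → Fin k} (hf : Function.Surjective f)
    (s : Finset (Fin k)) (hs : ∑ i ∈ s, ((colorClass f i).card - 1) < Fintype.card V - k) :
    ∃ j ∉ s, 2 ≤ (colorClass f j).card := by
  rw [← sum_card_colorClass_sub_one hf, ← sum_compl_add_sum s, lt_add_iff_pos_left,
    sum_pos_iff] at hs
  obtain ⟨j, hj, hpos⟩ := hs
  exact ⟨j, mem_compl.1 hj, by omega⟩

theorem colorType_comp_perm (f : V → Fin k) (σ : Equiv.Perm V) :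
    colorType (f ∘ σ) = colorType f :=
  Multiset.map_congr rfl fun i _ => card_equiv σ fun v => by simp

variable [DecidableEq V] {G : SimpleGraph V} {f : V → Fin k}

theorem wienerSet_colorClass_le_wienerColoring (i : Fin k) :
    wienerSet G (colorClass f i) ≤ wienerColoring G f :=
  single_le_sum (f := fun j => wienerSet G (colorClass f j)) (fun _ _ => Nat.zero_le _)
    (mem_univ i)

theorem wienerSet_colorClass_add_le_wienerColoring {i j : Fin k} (hij : i ≠ j) :
    wienerSet G (colorClass f i) + wienerSet G (colorClass f j) ≤ wienerColoring G f := by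
  rw [← sum_pair (f := fun i => wienerSet G (colorClass f i)) hij]
  exact sum_le_sum_of_subset (subset_univ _)

theorem dist_le_wienerSet_colorClass {u v : V} (h : f u = f v) :
    G.dist u v ≤ wienerSet G (colorClass f (f u)) := by
  rcases eq_or_ne u v with rfl | hne
  · simp
  · rw [← wienerSet_pair G hne]
    exact wienerSet_mono G (by simp [insert_subset_iff, h])

theorem dist_le_wienerColoring {u v : V} (h : f u = f v) : G.dist u v ≤ wienerColoring G f :=
  (dist_le_wienerSet_colorClass h).trans (wienerSet_colorClass_le_wienerColoring _)

theorem dist_add_dist_le_wienerColoring {u v u' v' : V} (huv : f u = f v) (hu'v' : f u' = f v')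
    (hne : f u ≠ f u') : G.dist u v + G.dist u' v' ≤ wienerColoring G f :=
  (add_le_add (dist_le_wienerSet_colorClass huv) (dist_le_wienerSet_colorClass hu'v')).trans
    (wienerSet_colorClass_add_le_wienerColoring hne)

theorem dist_add_dist_add_dist_le_wienerColoring {u v w : V} (huv : f u = f v)
    (huw : f u = f w) (hne : u ≠ v) (hne' : u ≠ w) (hne'' : v ≠ w) :
    G.dist u v + G.dist u w + G.dist v w ≤ wienerColoring G f := by
  rw [← wienerSet_triple G hne hne' hne'']
  exact (wienerSet_mono G (by simp [insert_subset_iff, ← huv, ← huw])).trans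
    (wienerSet_colorClass_le_wienerColoring (f u))

theorem IsWeakMaximizer.exists_rearrangement (hf : IsWeakMaximizer G f) {ι : Type*} [Finite ι]
    {p q : ι → V} (hp : p.Injective) (hq : q.Injective) :
    ∃ g : V → Fin k, (∀ a, g (p a) = f (q a)) ∧
      wienerColoring G g ≤ wienerColoring G f := by
  obtain ⟨σ, hσ⟩ := Equiv.Perm.exists_extending_pair p q hp hq
  exact ⟨f ∘ σ, fun a => congrArg f (hσ a),
    hf.2 _ (hf.1.comp σ.surjective) (colorType_comp_perm f σ)⟩

end Coloring

section WeakMaximizerOnCycle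

variable {n k : ℕ} [NeZero n] {f : ZMod n → Fin k}

theorem wienerSet_cycleGraphZMod_le (hn : 1 < n) (he : Even n) {A : Finset (ZMod n)}
    (hA : A.card ≤ 3) : wienerSet (cycleGraphZMod n) A ≤ (A.card - 1) * (n / 2) := by
  obtain h | h | h : A.card ≤ 1 ∨ A.card = 2 ∨ A.card = 3 := by omega
  · rw [wienerSet_eq_zero_of_card_le_one _ h]
    exact Nat.zero_le _
  · obtain ⟨u, v, huv, rfl⟩ := card_eq_two.1 h
    rw [wienerSet_pair _ huv, h]
    simpa using dist_cycleGraphZMod_le_half hn u v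
  · obtain ⟨u, v, w, huv, huw, hvw, rfl⟩ := card_eq_three.1 h
    rw [wienerSet_triple _ huv huw hvw, h, Nat.two_mul_div_two_of_even he]
    exact dist_add_dist_add_dist_cycleGraphZMod_le hn u v w

theorem wienerColoring_cycleGraphZMod_le (hn : 1 < n) (he : Even n) (hnk : n - k ≤ 2)
    {g : ZMod n → Fin k} (hg : Function.Surjective g) :
    wienerColoring (cycleGraphZMod n) g ≤ (n - k) * (n / 2) := by
  have hsum := sum_card_colorClass_sub_one hg
  rw [ZMod.card] at hsum
  have hle (i : Fin k) : (colorClass g i).card - 1 ≤ n - k :=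
    hsum ▸ single_le_sum (f := fun j => (colorClass g j).card - 1) (fun _ _ => Nat.zero_le _)
      (mem_univ i)
  calc wienerColoring (cycleGraphZMod n) g
      ≤ ∑ i, ((colorClass g i).card - 1) * (n / 2) :=
        sum_le_sum fun i _ => wienerSet_cycleGraphZMod_le hn he (by have := hle i; omega)
    _ = (n - k) * (n / 2) := by rw [← sum_mul, hsum]

theorem IsWeakMaximizer.half_le_wienerColoring_cycleGraphZMod (hn : 1 < n)
    (hf : IsWeakMaximizer (cycleGraphZMod n) f) {i : Fin k} (hi : 2 ≤ (colorClass f i).card) :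
    n / 2 ≤ wienerColoring (cycleGraphZMod n) f := by
  obtain ⟨a, ha, b, hb, hab⟩ := one_lt_card.1 hi
  rw [mem_colorClass] at ha hb
  obtain ⟨g, hg, hgf⟩ := hf.exists_rearrangement (q := ![a, b])
    (ZMod.injective_natCast_comp_of_lt (e := ![0, 0 + n / 2])
      (by intro i j; fin_cases i <;> fin_cases j <;> simp <;> omega)
      (by simp [Fin.forall_fin_succ]; omega))
    (by intro i j; fin_cases i <;> fin_cases j <;> simp [hab, hab.symm])
  have hg0 : g ((0 : ℕ) : ZMod n) = i := (hg 0).trans ha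
  have hg1 : g ((0 + n / 2 : ℕ) : ZMod n) = i := (hg 1).trans hb
  calc n / 2 = (cycleGraphZMod n).dist ((0 : ℕ) : ZMod n) ((0 + n / 2 : ℕ) : ZMod n) :=
        (dist_cycleGraphZMod_natCast_add_half hn 0).symm
    _ ≤ wienerColoring (cycleGraphZMod n) g := dist_le_wienerColoring (hg0.trans hg1.symm)
    _ ≤ wienerColoring (cycleGraphZMod n) f := hgf

theorem IsWeakMaximizer.two_mul_half_le_wienerColoring_cycleGraphZMod_of_three_le_card
    (hn : 3 < n) (hf : IsWeakMaximizer (cycleGraphZMod n) f) {i : Fin k}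
    (hi : 3 ≤ (colorClass f i).card) :
    2 * (n / 2) ≤ wienerColoring (cycleGraphZMod n) f := by
  obtain ⟨a, ha, b, hb, c, hc, hab, hac, hbc⟩ := two_lt_card.1 hi
  rw [mem_colorClass] at ha hb hc
  have hp := ZMod.injective_natCast_comp_of_lt (n := n) (e := ![0, 0 + n / 2, 1])
    (by intro i j; fin_cases i <;> fin_cases j <;> simp <;> omega)
    (by simp [Fin.forall_fin_succ]; omega)
  obtain ⟨g, hg, hgf⟩ := hf.exists_rearrangement (q := ![a, b, c]) hp
    (by intro i j; fin_cases i <;> fin_cases j <;> simp [*, Ne.symm])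
  have hg0 : g ((0 : ℕ) : ZMod n) = i := (hg 0).trans ha
  have hg1 : g ((0 + n / 2 : ℕ) : ZMod n) = i := (hg 1).trans hb
  have hg2 : g ((1 : ℕ) : ZMod n) = i := (hg 2).trans hc
  have hn1 : 1 < n := by omega
  have huv : (cycleGraphZMod n).dist ((0 : ℕ) : ZMod n) ((0 + n / 2 : ℕ) : ZMod n) = n / 2 :=
    dist_cycleGraphZMod_natCast_add_half hn1 0
  set u : ZMod n := ((0 : ℕ) : ZMod n)
  set v : ZMod n := ((0 + n / 2 : ℕ) : ZMod n)
  set w : ZMod n := ((1 : ℕ) : ZMod n)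
  calc 2 * (n / 2)
      = (cycleGraphZMod n).dist u v + (cycleGraphZMod n).dist u v := by rw [huv, two_mul]
    _ ≤ (cycleGraphZMod n).dist u v + (cycleGraphZMod n).dist u w
          + (cycleGraphZMod n).dist v w := by
        rw [add_assoc, SimpleGraph.dist_comm (u := v)]
        exact add_le_add le_rfl (dist_cycleGraphZMod_triangle hn1 u w v)
    _ ≤ wienerColoring (cycleGraphZMod n) g :=
        dist_add_dist_add_dist_le_wienerColoring (hg0.trans hg1.symm) (hg0.trans hg2.symm)
          (hp.ne (by decide : (0 : Fin 3) ≠ 1)) (hp.ne (by decide : (0 : Fin 3) ≠ 2))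
          (hp.ne (by decide : (1 : Fin 3) ≠ 2))
    _ ≤ wienerColoring (cycleGraphZMod n) f := hgf

theorem IsWeakMaximizer.two_mul_half_le_wienerColoring_cycleGraphZMod_of_two_le_card
    (hn : 3 < n) (hf : IsWeakMaximizer (cycleGraphZMod n) f) {i j : Fin k} (hij : i ≠ j)
    (hi : 2 ≤ (colorClass f i).card) (hj : 2 ≤ (colorClass f j).card) :
    2 * (n / 2) ≤ wienerColoring (cycleGraphZMod n) f := by
  obtain ⟨a, ha, b, hb, hab⟩ := one_lt_card.1 hi
  obtain ⟨c, hc, d, hd, hcd⟩ := one_lt_card.1 hj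
  rw [mem_colorClass] at ha hb hc hd
  have hne {x y : ZMod n} (hx : f x = i) (hy : f y = j) : x ≠ y :=
    fun h => hij (hx ▸ hy ▸ congrArg f h)
  have hac := hne ha hc; have had := hne ha hd; have hbc := hne hb hc; have hbd := hne hb hd
  obtain ⟨g, hg, hgf⟩ := hf.exists_rearrangement (q := ![a, b, c, d])
    (ZMod.injective_natCast_comp_of_lt (e := ![0, 0 + n / 2, 1, 1 + n / 2])
      (by intro i j; fin_cases i <;> fin_cases j <;> simp <;> omega)
      (by simp [Fin.forall_fin_succ]; omega))
    (by intro i j; fin_cases i <;> fin_cases j <;> simp [*, Ne.symm])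
  have hg0 : g ((0 : ℕ) : ZMod n) = i := (hg 0).trans ha
  have hg1 : g ((0 + n / 2 : ℕ) : ZMod n) = i := (hg 1).trans hb
  have hg2 : g ((1 : ℕ) : ZMod n) = j := (hg 2).trans hc
  have hg3 : g ((1 + n / 2 : ℕ) : ZMod n) = j := (hg 3).trans hd
  have hn1 : 1 < n := by omega
  calc 2 * (n / 2)
      = (cycleGraphZMod n).dist ((0 : ℕ) : ZMod n) ((0 + n / 2 : ℕ) : ZMod n)
        + (cycleGraphZMod n).dist ((1 : ℕ) : ZMod n) ((1 + n / 2 : ℕ) : ZMod n) := by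
        rw [dist_cycleGraphZMod_natCast_add_half hn1, dist_cycleGraphZMod_natCast_add_half hn1,
          two_mul]
    _ ≤ wienerColoring (cycleGraphZMod n) g :=
        dist_add_dist_le_wienerColoring (hg0.trans hg1.symm) (hg2.trans hg3.symm)
          (by rwa [hg0, hg2])
    _ ≤ wienerColoring (cycleGraphZMod n) f := hgf

theorem IsWeakMaximizer.le_wienerColoring_cycleGraphZMod (hk : 2 ≤ k) (hkn : k ≤ n)
    (hnk : n - k ≤ 2) (hf : IsWeakMaximizer (cycleGraphZMod n) f) :
    (n - k) * (n / 2) ≤ wienerColoring (cycleGraphZMod n) f := by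
  have hsum := sum_card_colorClass_sub_one hf.1
  rw [ZMod.card] at hsum
  obtain h | h | h : n - k = 0 ∨ n - k = 1 ∨ n - k = 2 := by omega
  · simp [h]
  · obtain ⟨i, -, hi⟩ := exists_two_le_card_colorClass hf.1 ∅ (by simp; omega)
    rw [h, one_mul]
    exact hf.half_le_wienerColoring_cycleGraphZMod (by omega) hi
  · obtain ⟨i, -, hi⟩ := exists_two_le_card_colorClass hf.1 ∅ (by simp; omega)
    rw [h]
    rcases hi.lt_or_eq with hi | hi
    · exact hf.two_mul_half_le_wienerColoring_cycleGraphZMod_of_three_le_card (by omega) hi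
    · obtain ⟨j, hj, hj2⟩ := exists_two_le_card_colorClass hf.1 {i} (by simp; omega)
      exact hf.two_mul_half_le_wienerColoring_cycleGraphZMod_of_two_le_card (by omega)
        (Ne.symm (by simpa using hj)) hi.le hj2

end WeakMaximizerOnCycle

/-- For `2 ≤ k ≤ n` with `n` even and `n − k ≤ 2`, every `k`-color weak maximizer `f` of
`W` on `C_n` attains the maximum Wiener index among `k`-color weak maximizers. -/
theorem cycle_max_small (n k : ℕ) [NeZero n] (hk : 2 ≤ k) (hkn : k ≤ n) (hn : Even n)
    (hnk : n - k ≤ 2)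
    (f : ZMod n → Fin k) (hf : IsWeakMaximizer (cycleGraphZMod n) f) :
    ∀ g : ZMod n → Fin k, IsWeakMaximizer (cycleGraphZMod n) g →
      wienerColoring (cycleGraphZMod n) g ≤ wienerColoring (cycleGraphZMod n) f := fun g hg =>
  (wienerColoring_cycleGraphZMod_le (by omega) hn hnk hg.1).trans
    (hf.le_wienerColoring_cycleGraphZMod hk hkn hnk)
end
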